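/- arXiv:1602.00930 — 2 statements merged into one kernel-verified Lean document; each statement's English description precedes it below -/
import Mathlib

section
/- For the Kerr–de Sitter metric, let dω² = dθ² + ((1+α cos²θ)/(1+α)) sin²θ dφ². Then: (1) dω² is a smooth Riemannian metric on S²; (2) one has the identity g_{θθ} dθ² + g_{φφ} dφ² = (ρ²/Δ_θ) dω² + (2M a² r/((1+α)² ρ²) + a²/(1+α)) (sin²θ dφ)². -/
/-!
Statement 9 (Gérard–Oulghazi–Wrochna, Lemma A.2): for the Kerr–de Sitter metric, with
`dω² = dθ² + ((1+α cos²θ)/(1+α)) sin²θ dφ²`: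
(1) `dω²` is a smooth Riemannian metric on `S²`;
(2) `g_θθ dθ² + g_φφ dφ² = (ρ²/Δ_θ) dω² + (2Ma²r/((1+α)²ρ²) + a²/(1+α)) (sin²θ dφ)²`.
-/

noncomputable section
open Metric Set Real

abbrev Eucl (n : ℕ) : Type := EuclideanSpace ℝ (Fin n)
abbrev Bilin (n : ℕ) : Type := Eucl n →L[ℝ] Eucl n →L[ℝ] ℝ

/-- The Euclidean inner product of `ℝ³` as a bilinear form. -/
def inner3 : Bilin 3 :=
  ∑ i : Fin 3, (EuclideanSpace.proj i).smulRight (EuclideanSpace.proj i)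

/-- The 1-form `sin²θ dφ = x dy - y dx` on `ℝ³`, at the point `p`. -/
def omegaForm (p : Eucl 3) : Eucl 3 →L[ℝ] ℝ :=
  p 0 • EuclideanSpace.proj (1 : Fin 3) - p 1 • EuclideanSpace.proj (0 : Fin 3)

/-- The tensor `dω² = (round metric) − (α/(1+α)) (sin²θ dφ)²` on `ℝ³ ⊃ S²`, extrinsically:
`dω²_p(u,v) = ⟪u,v⟫ − (α/(1+α)) (x u_y − y u_x)(x v_y − y v_x)`. -/
def domega2 (α : ℝ) (p : Eucl 3) : Bilin 3 :=
  inner3 - (α / (1 + α)) • (omegaForm p).smulRight (omegaForm p)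

/-- Spherical coordinates parametrization of `S²`. -/
def sph (θ φ : ℝ) : Eucl 3 :=
  (WithLp.equiv 2 (Fin 3 → ℝ)).symm ![sin θ * cos φ, sin θ * sin φ, cos θ]

/-- The coordinate vector field `∂_θ`. -/
def vTheta (θ φ : ℝ) : Eucl 3 :=
  (WithLp.equiv 2 (Fin 3 → ℝ)).symm ![cos θ * cos φ, cos θ * sin φ, -sin θ]

/-- The coordinate vector field `∂_φ`. -/
def vPhi (θ φ : ℝ) : Eucl 3 :=
  (WithLp.equiv 2 (Fin 3 → ℝ)).symm ![-(sin θ * sin φ), sin θ * cos φ, 0]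


/-- `omegaForm` as a continuous linear map in the point. -/
def Fom : Eucl 3 →L[ℝ] (Eucl 3 →L[ℝ] ℝ) :=
  (EuclideanSpace.proj (0 : Fin 3)).smulRight (EuclideanSpace.proj (1 : Fin 3)) -
    (EuclideanSpace.proj (1 : Fin 3)).smulRight (EuclideanSpace.proj (0 : Fin 3))

lemma omegaForm_eq_Fom (p : Eucl 3) : omegaForm p = Fom p := by
  simp [omegaForm, Fom]

section KdS

/-- Kerr–de Sitter coefficient `Δ_r` (with `α/a² = Λ/3`). -/
def Δr (M a Λ r : ℝ) : ℝ := (1 - Λ / 3 * r ^ 2) * (r ^ 2 + a ^ 2) - 2 * M * r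

/-- Kerr–de Sitter coefficient `Δ_θ`. -/
def Δθ (α θ : ℝ) : ℝ := 1 + α * cos θ ^ 2

/-- `ρ² = r² + a² cos²θ`. -/
def ρsq (a r θ : ℝ) : ℝ := r ^ 2 + a ^ 2 * cos θ ^ 2

/-- `σ² = (r²+a²)² Δ_θ − a² Δ_r sin²θ`. -/
def σsq (M a Λ α r θ : ℝ) : ℝ :=
  (r ^ 2 + a ^ 2) ^ 2 * Δθ α θ - a ^ 2 * Δr M a Λ r * sin θ ^ 2

/-- `g_θθ = ρ²/Δ_θ`. -/
def gθθ (a α r θ : ℝ) : ℝ := ρsq a r θ / Δθ α θ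

/-- `g_φφ = sin²θ σ²/((1+α)² ρ²)`. -/
def gφφ (M a Λ α r θ : ℝ) : ℝ :=
  sin θ ^ 2 * σsq M a Λ α r θ / ((1 + α) ^ 2 * ρsq a r θ)

set_option maxHeartbeats 1600000
/-- **Lemma A.2.**  Let `α = Λa²/3 ≥ 0`.  Then:
(1) `dω² = dθ² + ((1+α cos²θ)/(1+α)) sin²θ dφ²` is a smooth Riemannian metric on `S²`:
    it depends smoothly (polynomially) on the ambient point, its pullback under the
    spherical-coordinates parametrization is the stated coordinate expression, and it is
    positive definite on every tangent space of the unit sphere;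
(2) one has the identity
    `g_θθ dθ² + g_φφ dφ² = (ρ²/Δ_θ) dω² + (2Ma²r/((1+α)²ρ²) + a²/(1+α)) (sin²θ dφ)²`. -/
theorem kerr_de_sitter_sphere_metric (M a Λ α : ℝ)
    (hα : α = Λ * a ^ 2 / 3) (hΛ : 0 ≤ Λ) :
    -- (1) smoothness of `dω²`
    ContDiff ℝ (⊤ : ℕ∞) (domega2 α) ∧
    -- (1) in spherical coordinates, `dω²` is `dθ² + ((1+α cos²θ)/(1+α)) sin²θ dφ²`
    (∀ θ φ A B : ℝ,
      domega2 α (sph θ φ) (A • vTheta θ φ + B • vPhi θ φ) (A • vTheta θ φ + B • vPhi θ φ)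
        = A ^ 2 + Δθ α θ / (1 + α) * sin θ ^ 2 * B ^ 2) ∧
    -- (1) positive definiteness on tangent spaces of `S²`
    (∀ p ∈ Metric.sphere (0 : Eucl 3) 1, ∀ u : Eucl 3,
      (inner ℝ p u : ℝ) = 0 → u ≠ 0 → 0 < domega2 α p u u) ∧
    -- (2) the identity of quadratic forms in `(dθ, dφ) = (A, B)`
    (∀ r θ A B : ℝ, 0 < r →
      gθθ a α r θ * A ^ 2 + gφφ M a Λ α r θ * B ^ 2
        = ρsq a r θ / Δθ α θ *
            (A ^ 2 + Δθ α θ / (1 + α) * sin θ ^ 2 * B ^ 2)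
          + (2 * M * a ^ 2 * r / ((1 + α) ^ 2 * ρsq a r θ) + a ^ 2 / (1 + α)) *
              (sin θ ^ 2 * B) ^ 2) := by
  have hα0 : 0 ≤ α := by
    rw [hα]; positivity
  have h1α : (0:ℝ) < 1 + α := by linarith
  have h1α' : (1:ℝ) + α ≠ 0 := ne_of_gt h1α
  refine ⟨?_, ?_, ?_, ?_⟩
  · -- smoothness
    have hFω : domega2 α = fun p =>
        inner3 - (α / (1 + α)) •
          (ContinuousLinearMap.smulRightL ℝ (Eucl 3) (Eucl 3 →L[ℝ] ℝ))
            (Fom p) (Fom p) := by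
      funext p
      simp [domega2, ContinuousLinearMap.smulRightL, omegaForm_eq_Fom]
    rw [hFω]
    exact contDiff_const.sub
      ((by fun_prop : ContDiff ℝ (⊤ : ℕ∞) (fun p => (ContinuousLinearMap.smulRightL ℝ (Eucl 3)
            (Eucl 3 →L[ℝ] ℝ)) (Fom p) (Fom p))).const_smul _)
  · -- coordinate expression
    intro θ φ A B
    have hθ := sin_sq_add_cos_sq θ
    have hφ := sin_sq_add_cos_sq φ
    simp only [domega2, inner3, omegaForm, sph, vTheta, vPhi,
      ContinuousLinearMap.sub_apply, ContinuousLinearMap.smul_apply,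
      ContinuousLinearMap.sum_apply, ContinuousLinearMap.smulRight_apply,
      PiLp.proj_apply, PiLp.add_apply, PiLp.smul_apply,
      WithLp.equiv_symm_apply, PiLp.toLp_apply, ContinuousLinearMap.add_apply, smul_eq_mul, Fin.sum_univ_three,
      Matrix.cons_val_zero, Matrix.cons_val_one, Matrix.head_cons,
      Matrix.cons_val_two, Matrix.tail_cons, Δθ]
    field_simp
    linear_combination ((1 + α) * A ^ 2 - α * B ^ 2 * sin θ ^ 2) * hθ +
      ((1 + α) * (A ^ 2 * cos θ ^ 2 + B ^ 2 * sin θ ^ 2) -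
        α * B ^ 2 * sin θ ^ 4 * (1 + cos φ ^ 2 + sin φ ^ 2)) * hφ
  · -- positive definiteness
    intro p hp u _ hu
    have hpn : ‖p‖ = 1 := by simpa using hp
    have e : ∀ x : Eucl 3, x 0 ^ 2 + x 1 ^ 2 + x 2 ^ 2 = ‖x‖ ^ 2 := by
      intro x
      have h := real_inner_self_eq_norm_sq x
      simp only [PiLp.inner_apply, Fin.sum_univ_three, RCLike.inner_apply,
        starRingEnd_apply, star_trivial] at h
      rw [← h]; ring
    have hp2 : p 0 ^ 2 + p 1 ^ 2 + p 2 ^ 2 = 1 := by rw [e, hpn]; norm_num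
    have hu2 : 0 < u 0 ^ 2 + u 1 ^ 2 + u 2 ^ 2 := by
      rw [e]; exact pow_pos (norm_pos_iff.mpr hu) 2
    have hval : domega2 α p u u =
        (u 0 ^ 2 + u 1 ^ 2 + u 2 ^ 2) -
          (α / (1 + α)) * (p 0 * u 1 - p 1 * u 0) ^ 2 := by
      simp only [domega2, inner3, omegaForm,
        ContinuousLinearMap.sub_apply, ContinuousLinearMap.smul_apply,
        ContinuousLinearMap.sum_apply, ContinuousLinearMap.smulRight_apply,
        ContinuousLinearMap.add_apply, PiLp.proj_apply, smul_eq_mul, Fin.sum_univ_three]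
      ring
    rw [hval]
    have hωle : (p 0 * u 1 - p 1 * u 0) ^ 2 ≤ u 0 ^ 2 + u 1 ^ 2 + u 2 ^ 2 := by
      nlinarith [sq_nonneg (p 0 * u 0 + p 1 * u 1), sq_nonneg (p 2),
        sq_nonneg (u 2), sq_nonneg (p 2 * u 0), sq_nonneg (p 2 * u 1)]
    have hc0 : 0 ≤ α / (1 + α) := by positivity
    have hc1 : α / (1 + α) < 1 := by
      rw [div_lt_one h1α]; linarith
    nlinarith [mul_le_mul_of_nonneg_left hωle hc0,
      mul_lt_mul_of_pos_right hc1 hu2]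
  · -- the quadratic-form identity
    intro r θ A B hr
    have hΔθ : Δθ α θ ≠ 0 := by
      have : (0:ℝ) < 1 + α * cos θ ^ 2 := by nlinarith [sq_nonneg (cos θ)]
      simpa [Δθ] using ne_of_gt this
    have hρ : ρsq a r θ ≠ 0 := by
      have : (0:ℝ) < r ^ 2 + a ^ 2 * cos θ ^ 2 := by positivity
      simpa [ρsq] using ne_of_gt this
    have hs : sin θ ^ 2 = 1 - cos θ ^ 2 := by
      have := sin_sq_add_cos_sq θ; linarith
    have hσ : σsq M a Λ α r θ =
        (r ^ 2 + a ^ 2) ^ 2 * (1 + α * cos θ ^ 2) -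
          (a ^ 2 * (r ^ 2 + a ^ 2) - α * r ^ 2 * (r ^ 2 + a ^ 2) - 2 * M * a ^ 2 * r) *
            sin θ ^ 2 := by
      rw [σsq, Δr, Δθ, hα]; ring
    have hΔθ' : 1 + α * cos θ ^ 2 ≠ 0 := by simpa [Δθ] using hΔθ
    have hρ' : r ^ 2 + a ^ 2 * cos θ ^ 2 ≠ 0 := by simpa [ρsq] using hρ
    simp only [gθθ, gφφ, hσ, Δθ, ρsq]
    rw [hs]
    field_simp
    ring


end KdS
end
end

section
/- Let M be a Riemannian manifold of bounded geometry, I ⊂ ℝ an open interval, and R_{-∞} ∈ C^∞_b(I; W^{-∞}(M)) such that 1 − R_{-∞} is invertible in B(L²(I;L²(M))). Then (1 − R_{-∞})^{-1} = 1 − R_{1,-∞} for some R_{1,-∞} ∈ C^∞_b(I; W^{-∞}(M)). (Spectral invariance of the algebra 1 + C^∞_b(I;W^{-∞}(M)).) -/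
/-!
Statement 10 (Gérard–Oulghazi–Wrochna, Lemma 5.8, spectral invariance): if
`R_{-∞} ∈ C^∞_b(I; W^{-∞}(M))` and `1 - R_{-∞}` is invertible in `B(L²(I;L²(M)))`, then
`(1 - R_{-∞})⁻¹ = 1 - R_{1,-∞}` with `R_{1,-∞} ∈ C^∞_b(I; W^{-∞}(M))`.

Smoothing operators are formalized through the bounded operator `Λ = (1-Δ_g)^{-1/2}` on
`H = L²(M)`:  `A ∈ W^{-∞}(M) = ∩_m B(H^{-m}(M), H^m(M))` iff for every `m` one can write
`A = Λ^m B Λ^m` with `B` bounded; the norm `‖A‖_m = ‖(1-Δ)^{m/2}A(1-Δ)^{m/2}‖` is `‖B‖`.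
Invertibility in `B(L²(I;L²(M))) = B(∫^⊕_I L²(M))` of a decomposable operator is
equivalent to fiberwise invertibility with uniformly bounded inverses.
-/

noncomputable section
open scoped ComplexConjugate
open Metric Set

variable {H : Type} [NormedAddCommGroup H] [InnerProductSpace ℂ H] [CompleteSpace H]

/-- `A` is a smoothing operator (relative to `Λ = (1-Δ_g)^{-1/2}`):
`A ∈ ∩_m B(H^{-m}, H^m)`, i.e. `A = Λ^m ∘ B ∘ Λ^m` with `B` bounded, for every `m`. -/
def IsSmoothing (lam : H →L[ℂ] H) (A : H →L[ℂ] H) : Prop :=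
  ∀ m : ℕ, ∃ B : H →L[ℂ] H, A = lam ^ m * B * lam ^ m

/-- `A ∈ C^∞_b(I; W^{-∞}(M))`: a smooth family of smoothing operators which is, together
with all its time derivatives, uniformly bounded in every smoothing norm `‖·‖_m`. -/
def CbSmoothingOn (lam : H →L[ℂ] H) (I : Set ℝ) (A : ℝ → H →L[ℂ] H) : Prop :=
  ∀ m : ℕ, ∃ B : ℝ → H →L[ℂ] H,
    (∀ t ∈ I, A t = lam ^ m * B t * lam ^ m) ∧
    ContDiffOn ℝ (⊤ : ℕ∞) B I ∧
    ∀ k : ℕ, ∃ C : ℝ, ∀ t ∈ I, ‖iteratedFDerivWithin ℝ k B I t‖ ≤ C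

section Helpers

variable {A : Type*} [NormedRing A] [NormedAlgebra ℝ A]

private lemma uniformBound {I : Set ℝ} {f : ℝ → A}
    (h : ∀ k : ℕ, ∃ C : ℝ, ∀ t ∈ I, ‖iteratedFDerivWithin ℝ k f I t‖ ≤ C) (k : ℕ) :
    ∃ C : ℝ, 0 ≤ C ∧ ∀ i ≤ k, ∀ t ∈ I, ‖iteratedFDerivWithin ℝ i f I t‖ ≤ C := by
  induction k with
  | zero =>
    obtain ⟨C, hC⟩ := h 0
    refine ⟨max C 0, le_max_right _ _, fun i hi t ht => ?_⟩
    obtain rfl : i = 0 := Nat.le_zero.mp hi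
    exact (hC t ht).trans (le_max_left _ _)
  | succ k ih =>
    obtain ⟨C, hC0, hC⟩ := ih
    obtain ⟨D, hD⟩ := h (k + 1)
    refine ⟨max C (max D 0), hC0.trans (le_max_left _ _), fun i hi t ht => ?_⟩
    rcases eq_or_lt_of_le hi with rfl | h'
    · exact (hD t ht).trans ((le_max_left _ _).trans (le_max_right _ _))
    · exact (hC i (Nat.lt_succ_iff.mp h') t ht).trans (le_max_left _ _)

private lemma mulBound {I : Set ℝ} (hI : UniqueDiffOn ℝ I) {f g : ℝ → A}
    (hf : ContDiffOn ℝ (⊤ : ℕ∞) f I) (hg : ContDiffOn ℝ (⊤ : ℕ∞) g I) {k : ℕ} {Cf Cg : ℝ}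
    (hCf0 : 0 ≤ Cf) (hCg0 : 0 ≤ Cg)
    (hCf : ∀ i ≤ k, ∀ t ∈ I, ‖iteratedFDerivWithin ℝ i f I t‖ ≤ Cf)
    (hCg : ∀ i ≤ k, ∀ t ∈ I, ‖iteratedFDerivWithin ℝ i g I t‖ ≤ Cg) :
    ∀ i ≤ k, ∀ t ∈ I,
      ‖iteratedFDerivWithin ℝ i (fun t => f t * g t) I t‖ ≤ 2 ^ k * Cf * Cg := by
  intro i hik t ht
  refine (norm_iteratedFDerivWithin_mul_le hf hg hI ht (by exact_mod_cast le_top)).trans ?_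
  have h1 : ∑ j ∈ Finset.range (i + 1), (i.choose j : ℝ) *
      ‖iteratedFDerivWithin ℝ j f I t‖ * ‖iteratedFDerivWithin ℝ (i - j) g I t‖ ≤
      ∑ j ∈ Finset.range (i + 1), (i.choose j : ℝ) * Cf * Cg := by
    refine Finset.sum_le_sum fun j hj => ?_
    have hji : j ≤ i := Nat.lt_succ_iff.mp (Finset.mem_range.mp hj)
    have hf' := hCf j (hji.trans hik) t ht
    have hg' := hCg (i - j) ((Nat.sub_le _ _).trans hik) t ht
    gcongr
  refine h1.trans ?_
  have h2 : ∑ j ∈ Finset.range (i + 1), (i.choose j : ℝ) * Cf * Cg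
      = 2 ^ i * Cf * Cg := by
    rw [← Finset.sum_mul, ← Finset.sum_mul, ← Nat.cast_sum, Nat.sum_range_choose]
    push_cast; ring
  rw [h2]
  gcongr
  exact one_le_two

private lemma bddMul {I : Set ℝ} (hI : UniqueDiffOn ℝ I) {f g : ℝ → A}
    (hf : ContDiffOn ℝ (⊤ : ℕ∞) f I) (hg : ContDiffOn ℝ (⊤ : ℕ∞) g I)
    (hfb : ∀ k : ℕ, ∃ C : ℝ, ∀ t ∈ I, ‖iteratedFDerivWithin ℝ k f I t‖ ≤ C)
    (hgb : ∀ k : ℕ, ∃ C : ℝ, ∀ t ∈ I, ‖iteratedFDerivWithin ℝ k g I t‖ ≤ C) :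
    ∀ k : ℕ, ∃ C : ℝ, ∀ t ∈ I,
      ‖iteratedFDerivWithin ℝ k (fun t => f t * g t) I t‖ ≤ C := by
  intro k
  obtain ⟨Cf, hCf0, hCf⟩ := uniformBound hfb k
  obtain ⟨Cg, hCg0, hCg⟩ := uniformBound hgb k
  exact ⟨_, fun t ht => mulBound hI hf hg hCf0 hCg0 hCf hCg k le_rfl t ht⟩

private lemma bddAdd {I : Set ℝ} (hI : UniqueDiffOn ℝ I) {f g : ℝ → A}
    (hf : ContDiffOn ℝ (⊤ : ℕ∞) f I) (hg : ContDiffOn ℝ (⊤ : ℕ∞) g I)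
    (hfb : ∀ k : ℕ, ∃ C : ℝ, ∀ t ∈ I, ‖iteratedFDerivWithin ℝ k f I t‖ ≤ C)
    (hgb : ∀ k : ℕ, ∃ C : ℝ, ∀ t ∈ I, ‖iteratedFDerivWithin ℝ k g I t‖ ≤ C) :
    ∀ k : ℕ, ∃ C : ℝ, ∀ t ∈ I,
      ‖iteratedFDerivWithin ℝ k (fun t => f t + g t) I t‖ ≤ C := by
  intro k
  obtain ⟨Cf, hCf⟩ := hfb k
  obtain ⟨Cg, hCg⟩ := hgb k
  refine ⟨Cf + Cg, fun t ht => ?_⟩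
  rw [iteratedFDerivWithin_add_apply' (hf.of_le (by exact_mod_cast le_top) t ht) (hg.of_le (by exact_mod_cast le_top) t ht) hI ht]
  exact (norm_add_le _ _).trans (add_le_add (hCf t ht) (hCg t ht))

private lemma bddNeg {I : Set ℝ} (hI : UniqueDiffOn ℝ I) {f : ℝ → A}
    (hfb : ∀ k : ℕ, ∃ C : ℝ, ∀ t ∈ I, ‖iteratedFDerivWithin ℝ k f I t‖ ≤ C) :
    ∀ k : ℕ, ∃ C : ℝ, ∀ t ∈ I,
      ‖iteratedFDerivWithin ℝ k (fun t => -(f t)) I t‖ ≤ C := by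
  intro k
  obtain ⟨Cf, hCf⟩ := hfb k
  refine ⟨Cf, fun t ht => ?_⟩
  have hne : (fun t => -(f t)) = -f := rfl
  rw [hne, iteratedFDerivWithin_neg_apply hI ht, norm_neg]
  exact hCf t ht

private lemma bddConst {I : Set ℝ} (hI : UniqueDiffOn ℝ I) (c : A) :
    ∀ k : ℕ, ∃ C : ℝ, ∀ t ∈ I,
      ‖iteratedFDerivWithin ℝ k (fun _ => c) I t‖ ≤ C := by
  intro k
  match k with
  | 0 => exact ⟨‖c‖, fun t ht => le_of_eq norm_iteratedFDerivWithin_zero⟩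
  | (k + 1) =>
    refine ⟨0, fun t ht => ?_⟩
    rw [iteratedFDerivWithin_const_of_ne (Nat.succ_ne_zero k) c I]
    simp

private lemma normShift {I : Set ℝ} (hI : UniqueDiffOn ℝ I) {f : ℝ → A} {t : ℝ}
    (ht : t ∈ I) (k : ℕ) :
    ‖iteratedFDerivWithin ℝ (k + 1) f I t‖
      = ‖iteratedFDerivWithin ℝ k (derivWithin f I) I t‖ := by
  rw [norm_iteratedFDerivWithin_eq_norm_iteratedDerivWithin,
    norm_iteratedFDerivWithin_eq_norm_iteratedDerivWithin,
    iteratedDerivWithin_succ']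

end Helpers

/-- **Lemma 5.8 (spectral invariance).**  Let `R ∈ C^∞_b(I; W^{-∞}(M))` be such that
`1 - R` is invertible in `B(L²(I; L²(M)))` (equivalently: `1 - R(t)` is invertible for
every `t ∈ I`, with uniformly bounded inverses).  Then
`(1 - R)⁻¹ = 1 - R₁` for some `R₁ ∈ C^∞_b(I; W^{-∞}(M))`. -/
theorem spectral_invariance_smoothing
    -- `Λ = (1-Δ_g)^{-1/2}`: a positive selfadjoint injective contraction
    (lam : H →L[ℂ] H) (hsa : IsSelfAdjoint lam)
    (hpos : ∀ x : H, 0 ≤ (inner ℂ (lam x) x : ℂ).re)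
    (hinj : Function.Injective lam) (hdr : DenseRange lam) (hnorm : ‖lam‖ ≤ 1)
    -- the open interval `I`
    (a b : ℝ) (hab : a < b)
    -- `R ∈ C^∞_b(I; W^{-∞}(M))`
    (R : ℝ → H →L[ℂ] H) (hR : CbSmoothingOn lam (Ioo a b) R)
    -- invertibility of `1 - R` in `B(L²(I; L²(M)))`
    (hinv : ∀ t ∈ Ioo a b, IsUnit (1 - R t))
    (hbdd : ∃ C : ℝ, ∀ t ∈ Ioo a b, ‖Ring.inverse (1 - R t)‖ ≤ C) :
    ∃ R₁ : ℝ → H →L[ℂ] H, CbSmoothingOn lam (Ioo a b) R₁ ∧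
      ∀ t ∈ Ioo a b, Ring.inverse (1 - R t) = 1 - R₁ t := by
  have hIo : IsOpen (Ioo a b) := isOpen_Ioo
  have hI : UniqueDiffOn ℝ (Ioo a b) := hIo.uniqueDiffOn
  -- `R` itself is smooth with uniformly bounded derivatives (take `m = 0`)
  obtain ⟨B₀, hB₀eq, hB₀sm, hB₀bdd⟩ := hR 0
  have hReq : EqOn R B₀ (Ioo a b) := fun t ht => by simpa using hB₀eq t ht
  have hRsm : ContDiffOn ℝ (⊤ : ℕ∞) R (Ioo a b) := hB₀sm.congr fun t ht => hReq ht
  have hRbdd : ∀ k : ℕ, ∃ C : ℝ, ∀ t ∈ Ioo a b,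
      ‖iteratedFDerivWithin ℝ k R (Ioo a b) t‖ ≤ C := by
    intro k
    obtain ⟨C, hC⟩ := hB₀bdd k
    exact ⟨C, fun t ht => by rw [iteratedFDerivWithin_congr hReq ht k]; exact hC t ht⟩
  set G : ℝ → H →L[ℂ] H := fun t => Ring.inverse (1 - R t) with hG
  have hGl : ∀ s ∈ Ioo a b, (1 - R s) * G s = 1 := by
    intro s hs; rw [hG]; exact Ring.mul_inverse_cancel _ (hinv s hs)
  have hGr : ∀ s ∈ Ioo a b, G s * (1 - R s) = 1 := by
    intro s hs; rw [hG]; exact Ring.inverse_mul_cancel _ (hinv s hs)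
  -- smoothness of `G`
  have hGsm : ContDiffOn ℝ (⊤ : ℕ∞) G (Ioo a b) := by
    rw [hG]
    intro t ht
    have h1 : ContDiffAt ℝ (⊤ : ℕ∞) (fun s => (1 : H →L[ℂ] H) - R s) t :=
      contDiffAt_const.sub ((hRsm t ht).contDiffAt (hIo.mem_nhds ht))
    have h2 : ContDiffAt ℝ (⊤ : ℕ∞) (Ring.inverse : (H →L[ℂ] H) → H →L[ℂ] H) (1 - R t) := by
      obtain ⟨u, hu⟩ := hinv t ht
      rw [← hu]
      exact contDiffAt_ringInverse ℝ u
    exact (h2.comp t h1).contDiffWithinAt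
  -- smoothness of `R'`
  have hR'sm : ContDiffOn ℝ (⊤ : ℕ∞) (derivWithin R (Ioo a b)) (Ioo a b) :=
    hRsm.derivWithin hI (by simp)
  -- the derivative of `G` is `G R' G`
  have hderiv : ∀ t ∈ Ioo a b, derivWithin G (Ioo a b) t
      = G t * derivWithin R (Ioo a b) t * G t := by
    intro t ht
    have hGd := ((hGsm t ht).differentiableWithinAt (by simp)).hasDerivWithinAt
    have hRd := ((hRsm t ht).differentiableWithinAt (by simp)).hasDerivWithinAt
    have hmul : HasDerivWithinAt (fun s => G s * (1 - R s))
        (derivWithin G (Ioo a b) t * (1 - R t) + G t * (0 - derivWithin R (Ioo a b) t))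
        (Ioo a b) t := hGd.mul ((hasDerivWithinAt_const t (Ioo a b) (1 : H →L[ℂ] H)).sub hRd)
    have hone : HasDerivWithinAt (fun _ : ℝ => (1 : H →L[ℂ] H))
        (derivWithin G (Ioo a b) t * (1 - R t) + G t * (0 - derivWithin R (Ioo a b) t))
        (Ioo a b) t :=
      hmul.congr (fun s hs => (hGr s hs).symm) (hGr t ht).symm
    have h0 : derivWithin G (Ioo a b) t * (1 - R t)
        + G t * (0 - derivWithin R (Ioo a b) t) = 0 := by
      rw [← hone.derivWithin (hI t ht)]
      exact (hasDerivWithinAt_const t (Ioo a b) (1 : H →L[ℂ] H)).derivWithin (hI t ht)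
    rw [zero_sub, mul_neg, ← sub_eq_add_neg] at h0
    have heq : derivWithin G (Ioo a b) t * (1 - R t)
        = G t * derivWithin R (Ioo a b) t := sub_eq_zero.mp h0
    calc derivWithin G (Ioo a b) t
        = derivWithin G (Ioo a b) t * ((1 - R t) * G t) := by rw [hGl t ht, mul_one]
      _ = derivWithin G (Ioo a b) t * (1 - R t) * G t := by rw [mul_assoc]
      _ = G t * derivWithin R (Ioo a b) t * G t := by rw [heq]
  -- uniform bounds on the derivatives of `G`
  obtain ⟨C₀, hC₀⟩ := hbdd
  have hGbdd : ∀ k : ℕ, ∃ C : ℝ, ∀ i ≤ k, ∀ t ∈ Ioo a b,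
      ‖iteratedFDerivWithin ℝ i G (Ioo a b) t‖ ≤ C := by
    intro k
    induction k with
    | zero =>
      refine ⟨C₀, fun i hi t ht => ?_⟩
      obtain rfl : i = 0 := Nat.le_zero.mp hi
      rw [norm_iteratedFDerivWithin_zero]
      simp only [hG]
      exact hC₀ t ht
    | succ k ih =>
      obtain ⟨C, hC⟩ := ih
      obtain ⟨CR, hCR0, hCR⟩ := uniformBound hRbdd (k + 1)
      have hR'b : ∀ i ≤ k, ∀ t ∈ Ioo a b,
          ‖iteratedFDerivWithin ℝ i (derivWithin R (Ioo a b)) (Ioo a b) t‖ ≤ CR := by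
        intro i hi t ht
        rw [← normShift hI ht i]
        exact hCR (i + 1) (Nat.succ_le_succ hi) t ht
      have hfsm : ContDiffOn ℝ (⊤ : ℕ∞) (fun s => G s * derivWithin R (Ioo a b) s) (Ioo a b) :=
        hGsm.mul hR'sm
      have hfb : ∀ i ≤ k, ∀ t ∈ Ioo a b,
          ‖iteratedFDerivWithin ℝ i (fun s => G s * derivWithin R (Ioo a b) s)
            (Ioo a b) t‖ ≤ 2 ^ k * max C 0 * CR :=
        mulBound hI hGsm hR'sm (le_max_right _ _) hCR0
          (fun i hi t ht => (hC i hi t ht).trans (le_max_left _ _)) hR'b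
      have hDb : ∀ i ≤ k, ∀ t ∈ Ioo a b,
          ‖iteratedFDerivWithin ℝ i
            (fun s => (G s * derivWithin R (Ioo a b) s) * G s) (Ioo a b) t‖
            ≤ 2 ^ k * (2 ^ k * max C 0 * CR) * max C 0 :=
        mulBound hI hfsm hGsm (by positivity) (le_max_right _ _) hfb
          (fun i hi t ht => (hC i hi t ht).trans (le_max_left _ _))
      refine ⟨max (max C 0) (2 ^ k * (2 ^ k * max C 0 * CR) * max C 0),
        fun i hi t ht => ?_⟩
      rcases eq_or_lt_of_le hi with rfl | h'
      · rw [normShift hI ht k,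
          iteratedFDerivWithin_congr (fun s hs => hderiv s hs) ht k]
        exact (hDb k le_rfl t ht).trans (le_max_right _ _)
      · exact ((hC i (Nat.lt_succ_iff.mp h') t ht).trans (le_max_left _ _)).trans
          (le_max_left _ _)
  have hGb : ∀ k : ℕ, ∃ C : ℝ, ∀ t ∈ Ioo a b,
      ‖iteratedFDerivWithin ℝ k G (Ioo a b) t‖ ≤ C := by
    intro k
    obtain ⟨C, hC⟩ := hGbdd k
    exact ⟨C, fun t ht => hC k le_rfl t ht⟩
  -- the candidate `R₁`
  refine ⟨fun t => -(R t + R t * G t * R t), ?_, ?_⟩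
  · -- `R₁ ∈ C^∞_b(I; W^{-∞}(M))`
    intro m
    obtain ⟨B, hBeq, hBsm, hBbdd⟩ := hR m
    refine ⟨fun t => -(B t + B t * (lam ^ m * G t * lam ^ m) * B t),
      fun t ht => ?_, ?_, ?_⟩
    · show -(R t + R t * G t * R t)
        = lam ^ m * (-(B t + B t * (lam ^ m * G t * lam ^ m) * B t)) * lam ^ m
      rw [hBeq t ht]
      generalize lam ^ m = L
      noncomm_ring
    · have hMsm : ContDiffOn ℝ (⊤ : ℕ∞) (fun t => lam ^ m * G t * lam ^ m) (Ioo a b) :=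
        (contDiffOn_const.mul hGsm).mul contDiffOn_const
      exact ((hBsm.add ((hBsm.mul hMsm).mul hBsm))).neg
    · have hM1sm : ContDiffOn ℝ (⊤ : ℕ∞) (fun t => lam ^ m * G t) (Ioo a b) :=
        contDiffOn_const.mul hGsm
      have hMsm : ContDiffOn ℝ (⊤ : ℕ∞) (fun t => lam ^ m * G t * lam ^ m) (Ioo a b) :=
        hM1sm.mul contDiffOn_const
      have hM1b : ∀ k : ℕ, ∃ C : ℝ, ∀ t ∈ Ioo a b,
          ‖iteratedFDerivWithin ℝ k (fun t => lam ^ m * G t) (Ioo a b) t‖ ≤ C :=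
        bddMul hI contDiffOn_const hGsm (bddConst hI _) hGb
      have hMb : ∀ k : ℕ, ∃ C : ℝ, ∀ t ∈ Ioo a b,
          ‖iteratedFDerivWithin ℝ k (fun t => lam ^ m * G t * lam ^ m) (Ioo a b) t‖ ≤ C :=
        bddMul hI hM1sm contDiffOn_const hM1b (bddConst hI _)
      have hP1sm : ContDiffOn ℝ (⊤ : ℕ∞) (fun t => B t * (lam ^ m * G t * lam ^ m)) (Ioo a b) :=
        hBsm.mul hMsm
      have hP1b : ∀ k : ℕ, ∃ C : ℝ, ∀ t ∈ Ioo a b,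
          ‖iteratedFDerivWithin ℝ k (fun t => B t * (lam ^ m * G t * lam ^ m))
            (Ioo a b) t‖ ≤ C :=
        bddMul hI hBsm hMsm hBbdd hMb
      have hPsm : ContDiffOn ℝ (⊤ : ℕ∞)
          (fun t => B t * (lam ^ m * G t * lam ^ m) * B t) (Ioo a b) :=
        hP1sm.mul hBsm
      have hPb : ∀ k : ℕ, ∃ C : ℝ, ∀ t ∈ Ioo a b,
          ‖iteratedFDerivWithin ℝ k (fun t => B t * (lam ^ m * G t * lam ^ m) * B t)
            (Ioo a b) t‖ ≤ C :=
        bddMul hI hP1sm hBsm hP1b hBbdd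
      exact bddNeg hI (bddAdd hI hBsm hPsm hBbdd hPb)
  · -- the inversion formula
    intro t ht
    have hGt : Ring.inverse (1 - R t) = G t := by rw [hG]
    show Ring.inverse (1 - R t) = 1 - -(R t + R t * G t * R t)
    rw [hGt, sub_neg_eq_add]
    have e1 : G t * R t = G t - 1 := by
      have h := hGr t ht
      rw [mul_sub, mul_one] at h
      have h2 := sub_eq_iff_eq_add.mp h
      rw [eq_sub_iff_add_eq]
      conv_rhs => rw [h2]
      abel
    have e2 : G t = 1 + R t * G t := by
      have h := hGl t ht
      rw [sub_mul, one_mul] at h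
      exact sub_eq_iff_eq_add.mp h
    have e3 : R t + R t * G t * R t = R t * G t := by
      rw [mul_assoc, e1, mul_sub, mul_one]
      abel
    rw [e3]
    exact e2
end
end
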